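/- arXiv:1807.10217 — 3 statements merged into one kernel-verified Lean document; each statement's English description precedes it below -/
import Mathlib

section
/- The sets P(w) and P(w*) have the same cardinality, where w* = (w_n, ..., w_1) is the reverse of w. -/
open scoped BigOperators Classical

noncomputable section

/-- A triangular array of size `n`: entries `y i j` for `1 ≤ i ≤ n`, `1 ≤ j ≤ n - i + 1`
(zero outside this range), weakly decreasing along ladders: `y (i-1) (j+1) ≤ y i j`. -/
def IsTri (n : ℕ) (y : ℕ → ℕ → ℕ) : Prop :=
  (∀ i j, ¬(1 ≤ i ∧ i ≤ n ∧ 1 ≤ j ∧ j ≤ n - i + 1) → y i j = 0) ∧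
  (∀ i j, 2 ≤ i → i ≤ n → 1 ≤ j → j ≤ n - i + 1 → y (i - 1) (j + 1) ≤ y i j)

/-- The dimension vector of a triangular array: the `i`-th chute sum. -/
def udim (n : ℕ) (y : ℕ → ℕ → ℕ) (i : ℕ) : ℕ := ∑ j ∈ Finset.Icc 1 (n - i + 1), y i j

/-- The set `P(w)` of triangular arrays of size `n` with dimension vector `w`. -/
def InP (n : ℕ) (w : ℕ → ℕ) (y : ℕ → ℕ → ℕ) : Prop :=
  IsTri n y ∧ ∀ i, 1 ≤ i → i ≤ n → udim n y i = w i

/-- The set `B(w)`: families `(b i j)` for `1 ≤ i ≤ j ≤ n` (zero outside) with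
`∑ b i j • γ_{ij} = w`, i.e. for each `1 ≤ k ≤ n`, `∑_{i ≤ k ≤ j} b i j = w k`. -/
def InB (n : ℕ) (w : ℕ → ℕ) (b : ℕ → ℕ → ℕ) : Prop :=
  (∀ i j, ¬(1 ≤ i ∧ i ≤ j ∧ j ≤ n) → b i j = 0) ∧
  ∀ k, 1 ≤ k → k ≤ n → (∑ i ∈ Finset.Icc 1 k, ∑ j ∈ Finset.Icc k n, b i j) = w k

/-- The map `ν : P(w) → B(w)`. -/
def nuMap (n : ℕ) (y : ℕ → ℕ → ℕ) : ℕ → ℕ → ℕ := fun i j =>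
  if 1 ≤ i ∧ i ≤ j ∧ j ≤ n then y i (j - i + 1) - y (i - 1) (j - i + 2) else 0

/-- The map `ν̄ : B(w) → P(w)`. -/
def nubarMap (n : ℕ) (b : ℕ → ℕ → ℕ) : ℕ → ℕ → ℕ := fun i j =>
  if 1 ≤ i ∧ i ≤ n ∧ 1 ≤ j ∧ j ≤ n - i + 1 then ∑ h ∈ Finset.Icc 1 i, b h (i + j - 1) else 0

/-- `Raise Y i j` increments the entry in chute `i`, column `j`. -/
def Raise (y : ℕ → ℕ → ℕ) (i j : ℕ) : ℕ → ℕ → ℕ := fun p q =>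
  if p = i ∧ q = j then y p q + 1 else y p q

/-- `Lower Y i j` decrements the entry in chute `i`, column `j`. -/
def Lower (y : ℕ → ℕ → ℕ) (i j : ℕ) : ℕ → ℕ → ℕ := fun p q =>
  if p = i ∧ q = j then y p q - 1 else y p q

/-- `K_i(Y,k) = max({1} ∪ {j : 2 ≤ j ≤ k, y i j < y (i+1) (j-1)})`. -/
def Kval (y : ℕ → ℕ → ℕ) (i k : ℕ) : ℕ :=
  ((Finset.Icc 2 k).filter (fun j => y i j < y (i + 1) (j - 1))).sup id ⊔ 1

/-- Procedure `a`: `a(Y,i,k) = (Raise(Y,i,K_i(Y,k)), i-1, K_i(Y,k))`. -/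
def aStep (t : (ℕ → ℕ → ℕ) × ℕ × ℕ) : (ℕ → ℕ → ℕ) × ℕ × ℕ :=
  (Raise t.1 t.2.1 (Kval t.1 t.2.1 t.2.2), t.2.1 - 1, Kval t.1 t.2.1 t.2.2)

/-- Procedure `A_i`: apply `a` exactly `i` times starting from `(Y, i, n - i + 1)`. -/
def Aproc (n i : ℕ) (y : ℕ → ℕ → ℕ) : ℕ → ℕ → ℕ := (aStep^[i] (y, i, n - i + 1)).1

/-- `Del↘(Y)` : delete the first chute. -/
def delChute (y : ℕ → ℕ → ℕ) : ℕ → ℕ → ℕ := fun i j =>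
  if 1 ≤ i ∧ 1 ≤ j then y (i + 1) j else 0

/-- `Y ∪↘ Q` : adjoin `Q` as the new topmost chute. -/
def adjChute (y : ℕ → ℕ → ℕ) (q : ℕ → ℕ) : ℕ → ℕ → ℕ := fun i j =>
  if i = 0 then 0 else if i = 1 then q j else y (i - 1) j

/-- The set whose infimum is `I(Y,k)`; `I(Y,k) < ∞` iff this set is nonempty. -/
def Iset (n : ℕ) (y : ℕ → ℕ → ℕ) (k : ℕ) : Set ℕ := {j | k ≤ j ∧ j ≤ n ∧ 0 < y 1 j}

/-- `I(Y,k)`: the smallest `j ≥ k` with `y 1 j > 0`. -/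
def Idef (n : ℕ) (y : ℕ → ℕ → ℕ) (k : ℕ) : ℕ := sInf (Iset n y k)

/-- The set whose infimum is `J(Y,k)`; `J(Y,k) < ∞` iff this set is nonempty. -/
def Jset (n : ℕ) (y : ℕ → ℕ → ℕ) (k : ℕ) : Set ℕ :=
  {j | Idef n y k < j ∧ j ≤ n ∧ y 1 j < y 2 (j - 1)}

/-- `J(Y,k)`: the smallest `j > I(Y,k)` with `y 1 j < y 2 (j-1)`. -/
def Jdef (n : ℕ) (y : ℕ → ℕ → ℕ) (k : ℕ) : ℕ := sInf (Jset n y k)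

/-- Procedure `B`, by induction on the size `n`. -/
def Bproc : ℕ → (ℕ → ℕ → ℕ) → ℕ → ((ℕ → ℕ → ℕ) × ℕ)
  | 0, y, _ => (y, 1)
  | n + 1, y, k =>
    if (Jset (n + 1) y k).Nonempty then
      let zr := Bproc n (delChute y) (Jdef (n + 1) y k - 1)
      (Lower (adjChute zr.1 (y 1)) 1 (Idef (n + 1) y k), zr.2 + 1)
    else (Lower y 1 (Idef (n + 1) y k), 1)

/-- Apply `A_m^{y_{N+1-m,m} - y_{N-m,m+1}}` for `m = 1, …, M` (innermost `A_1`). -/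
def applyAs (N : ℕ) (y : ℕ → ℕ → ℕ) : ℕ → (ℕ → ℕ → ℕ) → (ℕ → ℕ → ℕ)
  | 0, z => z
  | m + 1, z => (Aproc N (m + 1))^[y (N - m) (m + 1) - y (N - m - 1) (m + 2)] (applyAs N y m z)

/-- `Del↗(Y)` : delete the last ladder (of an array of size `n`). -/
def delLadder (n : ℕ) (y : ℕ → ℕ → ℕ) : ℕ → ℕ → ℕ := fun i j =>
  if 1 ≤ i ∧ 1 ≤ j ∧ i + j ≤ n then y i j else 0

/-- The combinatorial Fourier transform `T`. -/
def Tmap : ℕ → (ℕ → ℕ → ℕ) → (ℕ → ℕ → ℕ)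
  | 0, y => y
  | 1, y => y
  | n + 2, y =>
      applyAs (n + 2) y (n + 2) (adjChute (Tmap (n + 1) (delLadder (n + 2) y)) (fun _ => 0))

/-- Iterate procedure `B` (with `k = 1`), recording the list of produced integers `q`. -/
def Biter (n : ℕ) (y : ℕ → ℕ → ℕ) : ℕ → ((ℕ → ℕ → ℕ) × List ℕ)
  | 0 => (y, [])
  | m + 1 =>
    let p := Biter n y m
    let b := Bproc n p.1 1
    (b.1, p.2 ++ [b.2])

/-- `Y ∪↗ P` : adjoin `P` as the new bottommost ladder (result of size `N`). -/
def adjLadder (N : ℕ) (z : ℕ → ℕ → ℕ) (p : ℕ → ℕ) : ℕ → ℕ → ℕ := fun i j =>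
  if 1 ≤ i ∧ 1 ≤ j ∧ i + j = N + 1 then p j else z i j

/-- The inverse combinatorial Fourier transform `T'`. -/
def Tinv : ℕ → (ℕ → ℕ → ℕ) → (ℕ → ℕ → ℕ)
  | 0, y => y
  | 1, y => y
  | n + 2, y =>
    let r := Biter (n + 2) y (udim (n + 2) y 1)
    adjLadder (n + 2) (Tinv (n + 1) (delChute r.1)) (fun j => r.2.countP (fun q => decide (j ≤ q)))

/-- The composition `x_{i+j-1} ∘ ⋯ ∘ x_{i+1} ∘ x_i` (`j` maps, starting at vertex `i`). -/
def chainMap (w : ℕ → ℕ) (x : ∀ m : ℕ, (Fin (w m) → ℂ) →ₗ[ℂ] (Fin (w (m + 1)) → ℂ)) (i : ℕ) :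
    ∀ j : ℕ, (Fin (w i) → ℂ) →ₗ[ℂ] (Fin (w (i + j)) → ℂ)
  | 0 => LinearMap.id
  | j + 1 => (x (i + j)).comp (chainMap w x i j)

/-- `u` is a Jordan basis of type `Y` for the representation `x`. -/
def IsJordanBasis (n : ℕ) (w : ℕ → ℕ) (y : ℕ → ℕ → ℕ)
    (x : ∀ m : ℕ, (Fin (w m) → ℂ) →ₗ[ℂ] (Fin (w (m + 1)) → ℂ))
    (u : ∀ m : ℕ, ℕ → ℕ → (Fin (w m) → ℂ)) : Prop :=
  (∀ i, 1 ≤ i → i ≤ n →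
    (LinearIndependent ℂ
      (fun p : {p : ℕ × ℕ // 1 ≤ p.1 ∧ p.1 ≤ n - i + 1 ∧ 1 ≤ p.2 ∧ p.2 ≤ y i p.1} =>
        u i p.1.1 p.1.2) ∧
    Submodule.span ℂ
      (Set.range (fun p : {p : ℕ × ℕ // 1 ≤ p.1 ∧ p.1 ≤ n - i + 1 ∧ 1 ≤ p.2 ∧ p.2 ≤ y i p.1} =>
        u i p.1.1 p.1.2)) = ⊤)) ∧
  (∀ i j k, 1 ≤ i → i + 1 ≤ n → 1 ≤ j → j ≤ n - i + 1 → 1 ≤ k → k ≤ y i j →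
    x i (u i j k) = if 2 ≤ j then u (i + 1) (j - 1) k else 0)

/-- `V` is a kernel flag of type `Y` (with the convention `V i 0 = ⊥`). -/
def IsKerFlag (n : ℕ) (w : ℕ → ℕ) (y : ℕ → ℕ → ℕ)
    (V : ∀ i : ℕ, ℕ → Submodule ℂ (Fin (w i) → ℂ)) : Prop :=
  ∀ i, 1 ≤ i → i ≤ n →
    V i 0 = ⊥ ∧
    (∀ j, j ≤ n - i → V i j ≤ V i (j + 1)) ∧
    V i (n - i + 1) = ⊤ ∧
    (∀ j, 1 ≤ j → j ≤ n - i + 1 → Module.finrank ℂ (V i j) = ∑ h ∈ Finset.Icc 1 j, y i h)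

/-- The representation `x` preserves the kernel flag `V`. -/
def PreservesFlag (n : ℕ) (w : ℕ → ℕ)
    (x : ∀ m : ℕ, (Fin (w m) → ℂ) →ₗ[ℂ] (Fin (w (m + 1)) → ℂ))
    (V : ∀ i : ℕ, ℕ → Submodule ℂ (Fin (w i) → ℂ)) : Prop :=
  ∀ i, 1 ≤ i → i + 1 ≤ n → ∀ j, 1 ≤ j → j ≤ n - i + 1 → ∀ v ∈ V i j,
    (j = 1 → x i v = 0) ∧ (2 ≤ j → x i v ∈ V (i + 1) (j - 1))

/-- The flag of kernels `V i j = ker (x_{i+j-1} ∘ ⋯ ∘ x_i)`. -/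
def kerFlag (w : ℕ → ℕ) (x : ∀ m : ℕ, (Fin (w m) → ℂ) →ₗ[ℂ] (Fin (w (m + 1)) → ℂ)) :
    ∀ i : ℕ, ℕ → Submodule ℂ (Fin (w i) → ℂ) := fun i j => LinearMap.ker (chainMap w x i j)

/-- The Lie-algebra stabilizer of the flag `V` inside `𝔤(w) = ∏ End(ℂ^{w_i})`. -/
def stabFlagSub (n : ℕ) (w : ℕ → ℕ) (V : ∀ i : ℕ, ℕ → Submodule ℂ (Fin (w i) → ℂ)) :
    Submodule ℂ (∀ i : Fin n, (Fin (w (i.val + 1)) → ℂ) →ₗ[ℂ] (Fin (w (i.val + 1)) → ℂ)) where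
  carrier := {g | ∀ (i : Fin n) (j : ℕ), 1 ≤ j → j ≤ n - (i.val + 1) + 1 →
    ∀ v ∈ V (i.val + 1) j, g i v ∈ V (i.val + 1) j}
  add_mem' := by
    intro a b ha hb i j h1 h2 v hv
    simpa using (V (i.val + 1) j).add_mem (ha i j h1 h2 v hv) (hb i j h1 h2 v hv)
  zero_mem' := by
    intro i j h1 h2 v hv
    simpa using (V (i.val + 1) j).zero_mem
  smul_mem' := by
    intro c a ha i j h1 h2 v hv
    simpa using (V (i.val + 1) j).smul_mem c (ha i j h1 h2 v hv)

/-- The linear space `E(w)^V` of representations preserving the kernel flag `V`. -/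
def presFlagSub (n : ℕ) (w : ℕ → ℕ) (V : ∀ i : ℕ, ℕ → Submodule ℂ (Fin (w i) → ℂ)) :
    Submodule ℂ (∀ i : Fin (n - 1), (Fin (w (i.val + 1)) → ℂ) →ₗ[ℂ] (Fin (w (i.val + 2)) → ℂ)) where
  carrier := {x | ∀ (i : Fin (n - 1)) (j : ℕ), 1 ≤ j → j ≤ n - (i.val + 1) + 1 →
    ∀ v ∈ V (i.val + 1) j,
      (j = 1 → x i v = 0) ∧ (2 ≤ j → x i v ∈ V (i.val + 2) (j - 1))}
  add_mem' := by
    intro a b ha hb i j h1 h2 v hv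
    obtain ⟨ha1, ha2⟩ := ha i j h1 h2 v hv
    obtain ⟨hb1, hb2⟩ := hb i j h1 h2 v hv
    constructor
    · intro hj
      simp [ha1 hj, hb1 hj]
    · intro hj
      simpa using (V (i.val + 2) (j - 1)).add_mem (ha2 hj) (hb2 hj)
  zero_mem' := by
    intro i j h1 h2 v hv
    constructor
    · intro _; simp
    · intro _
      simpa using (V (i.val + 2) (j - 1)).zero_mem
  smul_mem' := by
    intro c a ha i j h1 h2 v hv
    obtain ⟨ha1, ha2⟩ := ha i j h1 h2 v hv
    constructor
    · intro hj
      simp [ha1 hj]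
    · intro hj
      simpa using (V (i.val + 2) (j - 1)).smul_mem c (ha2 hj)

end

/-!
The map `ν` records the drops `y i j - y (i-1) (j+1)` along the ladders of a triangular array;
partial sums down the columns of such a family of drops (the map `ν̄`) recover the array, and the
chute sums of `ν̄ b` are the coefficients of `∑ b i j • γ_{ij}`. Hence `ν` is a bijection
`P(w) ≃ B(w)`. A family in `B(w)` writes `w` as a sum of indicators of intervals `[i, j]`, and
reflecting every interval in `k ↦ n + 1 - k` gives a bijection `B(w) ≃ B(w*)`.
-/

open Finset

lemma Finset.sum_Icc_tsub_pred_add {f : ℕ → ℕ} :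
    ∀ {m : ℕ}, (∀ h ∈ Icc 1 m, f (h - 1) ≤ f h) → ∑ h ∈ Icc 1 m, (f h - f (h - 1)) + f 0 = f m
  | 0, _ => by simp
  | m + 1, hf => by
    have ih := sum_Icc_tsub_pred_add fun h hh => hf h (Icc_subset_Icc_right m.le_succ hh)
    have hm := hf (m + 1) (by simp)
    rw [sum_Icc_succ_top (by omega), add_right_comm, ih]
    simp only [add_tsub_cancel_right] at hm ⊢
    omega

lemma Finset.sum_Icc_reflect {M : Type*} [AddCommMonoid M] (f : ℕ → M) {a b n : ℕ}
    (hb : b ≤ n) :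
    ∑ j ∈ Icc a b, f (n + 1 - j) = ∑ j ∈ Icc (n + 1 - b) (n + 1 - a), f j :=
  sum_nbij' (fun j => n + 1 - j) (fun j => n + 1 - j) (by simp; omega) (by simp; omega)
    (by simp; omega) (by simp; omega) (fun _ _ => rfl)

lemma IsTri.ladder_le {n : ℕ} {y : ℕ → ℕ → ℕ} (hy : IsTri n y) {i j : ℕ} (hi : 1 ≤ i)
    (hin : i ≤ n) (hj : 1 ≤ j) (hjn : j ≤ n - i + 1) : y (i - 1) (j + 1) ≤ y i j := by
  obtain rfl | hi2 := hi.eq_or_lt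
  · simp [hy.1 0 (j + 1) (by omega)]
  · exact hy.2 i j hi2 hin hj hjn

section Nu

variable {n : ℕ}

lemma isTri_nubarMap (b : ℕ → ℕ → ℕ) : IsTri n (nubarMap n b) := by
  refine ⟨fun i j h => if_neg h, fun i j hi hin hj hjn => ?_⟩
  rw [nubarMap, nubarMap, if_pos (by omega), if_pos (by omega),
    show i - 1 + (j + 1) - 1 = i + j - 1 by omega]
  exact sum_le_sum_of_subset (Icc_subset_Icc_right (by omega))

lemma udim_nubarMap (b : ℕ → ℕ → ℕ) {k : ℕ} (hk : 1 ≤ k) (hkn : k ≤ n) :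
    udim n (nubarMap n b) k = ∑ h ∈ Icc 1 k, ∑ c ∈ Icc k n, b h c := by
  have hreindex : ∀ h, ∑ j ∈ Icc 1 (n - k + 1), b h (k + j - 1) = ∑ c ∈ Icc k n, b h c := by
    intro h
    rw [show Icc k n = (Icc 1 (n - k + 1)).map (addRightEmbedding (k - 1)) by
      rw [map_add_right_Icc]; congr 1 <;> omega, sum_map]
    exact sum_congr rfl fun j _ => by simp only [addRightEmbedding_apply]; congr 1; omega
  calc udim n (nubarMap n b) k
      = ∑ j ∈ Icc 1 (n - k + 1), ∑ h ∈ Icc 1 k, b h (k + j - 1) :=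
        sum_congr rfl fun j hj => if_pos (by simp only [mem_Icc] at hj; omega)
    _ = ∑ h ∈ Icc 1 k, ∑ c ∈ Icc k n, b h c := by
        rw [sum_comm]; exact sum_congr rfl fun h _ => hreindex h

lemma nubarMap_nuMap {y : ℕ → ℕ → ℕ} (hy : IsTri n y) : nubarMap n (nuMap n y) = y := by
  funext i j
  by_cases hij : 1 ≤ i ∧ i ≤ n ∧ 1 ≤ j ∧ j ≤ n - i + 1
  · obtain ⟨hi, hin, hj, hjn⟩ := hij
    -- `ν̄ (ν y)` telescopes along the ladder through `(i, j)`, which starts outside the array.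
    set f : ℕ → ℕ := fun h => y h (i + j - h)
    have hterm : ∀ h ∈ Icc 1 i, nuMap n y h (i + j - 1) = f h - f (h - 1) := by
      intro h hh
      simp only [mem_Icc] at hh
      rw [nuMap, if_pos (by omega)]
      congr 2 <;> omega
    have hf : ∀ h ∈ Icc 1 i, f (h - 1) ≤ f h := by
      intro h hh
      simp only [mem_Icc] at hh
      have := hy.ladder_le (i := h) (j := i + j - h) (by omega) (by omega) (by omega) (by omega)
      simpa only [f, show i + j - (h - 1) = i + j - h + 1 by omega] using this
    have hf0 : f 0 = 0 := hy.1 0 _ (by omega)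
    rw [nubarMap, if_pos ⟨hi, hin, hj, hjn⟩, sum_congr rfl hterm,
      ← add_zero (∑ h ∈ Icc 1 i, _), ← hf0, sum_Icc_tsub_pred_add hf]
    simp only [f, show i + j - i = j by omega]
  · rw [nubarMap, if_neg hij, hy.1 i j hij]

lemma nuMap_nubarMap {b : ℕ → ℕ → ℕ} (hb : ∀ i j, ¬(1 ≤ i ∧ i ≤ j ∧ j ≤ n) → b i j = 0) :
    nuMap n (nubarMap n b) = b := by
  funext i j
  by_cases hij : 1 ≤ i ∧ i ≤ j ∧ j ≤ n
  · obtain ⟨hi, hij, hjn⟩ := hij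
    rw [nuMap, if_pos ⟨hi, hij, hjn⟩, nubarMap, if_pos (by omega),
      show i + (j - i + 1) - 1 = j by omega, nubarMap]
    obtain rfl | hi2 := hi.eq_or_lt
    · simp
    · rw [if_pos (by omega), show i - 1 + (j - i + 2) - 1 = j by omega,
        show i = i - 1 + 1 by omega, sum_Icc_succ_top (by omega)]
      simp
  · rw [nuMap, if_neg hij, hb i j hij]

lemma inB_nuMap_iff {w : ℕ → ℕ} {y : ℕ → ℕ → ℕ} (hy : IsTri n y) :
    InB n w (nuMap n y) ↔ InP n w y := by
  have hsupp : ∀ i j, ¬(1 ≤ i ∧ i ≤ j ∧ j ≤ n) → nuMap n y i j = 0 := fun i j h => if_neg h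
  have hudim : ∀ k, 1 ≤ k → k ≤ n →
      udim n y k = ∑ h ∈ Icc 1 k, ∑ c ∈ Icc k n, nuMap n y h c := fun k hk hkn => by
    rw [← udim_nubarMap _ hk hkn, nubarMap_nuMap hy]
  rw [InB, InP, and_iff_right hsupp, and_iff_right hy]
  exact forall₃_congr fun k hk hkn => by rw [hudim k hk hkn]

def equivPB (n : ℕ) (w : ℕ → ℕ) : {y // InP n w y} ≃ {b // InB n w b} where
  toFun y := ⟨nuMap n y, (inB_nuMap_iff y.2.1).2 y.2⟩
  invFun b := ⟨nubarMap n b, (inB_nuMap_iff (isTri_nubarMap b)).1 <| by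
    rw [nuMap_nubarMap b.2.1]; exact b.2⟩
  left_inv y := Subtype.ext (nubarMap_nuMap y.2.1)
  right_inv b := Subtype.ext (nuMap_nubarMap b.2.1)

end Nu

section Reverse

variable {n : ℕ}

/-- Reflects the interval `[i, j]` to `[n + 1 - j, n + 1 - i]`. -/
def reverseB (n : ℕ) (b : ℕ → ℕ → ℕ) : ℕ → ℕ → ℕ := fun i j => b (n + 1 - j) (n + 1 - i)

lemma InB.reverseB {w w' : ℕ → ℕ} {b : ℕ → ℕ → ℕ} (hb : InB n w b)
    (hw : ∀ k, 1 ≤ k → k ≤ n → w' k = w (n + 1 - k)) : InB n w' (reverseB n b) := by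
  refine ⟨fun i j hij => hb.1 _ _ (by omega), fun k hk hkn => ?_⟩
  calc ∑ i ∈ Icc 1 k, ∑ j ∈ Icc k n, b (n + 1 - j) (n + 1 - i)
      = ∑ j ∈ Icc k n, ∑ i ∈ Icc (n + 1 - k) n, b (n + 1 - j) i := by
        rw [sum_comm]
        refine sum_congr rfl fun j _ => ?_
        rw [sum_Icc_reflect (b (n + 1 - j)) hkn, Nat.add_sub_cancel]
    _ = ∑ i ∈ Icc 1 (n + 1 - k), ∑ j ∈ Icc (n + 1 - k) n, b i j :=
        (sum_Icc_reflect (fun i => ∑ j ∈ Icc (n + 1 - k) n, b i j) (a := k) le_rfl).trans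
          (by rw [Nat.add_sub_cancel_left])
    _ = w' k := by rw [hb.2 _ (by omega) (by omega), hw k hk hkn]

lemma reverseB_reverseB {b : ℕ → ℕ → ℕ} (hb : ∀ i j, ¬(1 ≤ i ∧ i ≤ j ∧ j ≤ n) → b i j = 0) :
    reverseB n (reverseB n b) = b := by
  funext i j
  by_cases hij : 1 ≤ i ∧ i ≤ j ∧ j ≤ n
  · simp only [reverseB]; congr 1 <;> omega
  · rw [hb i j hij]; exact hb _ _ (by omega)

def equivBReverse (n : ℕ) (w : ℕ → ℕ) :
    {b // InB n w b} ≃ {b // InB n (fun k => w (n + 1 - k)) b} where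
  toFun b := ⟨reverseB n b, b.2.reverseB fun _ _ _ => rfl⟩
  invFun b := ⟨reverseB n b, b.2.reverseB fun k _ _ => by congr 1; omega⟩
  left_inv b := Subtype.ext (reverseB_reverseB b.2.1)
  right_inv b := Subtype.ext (reverseB_reverseB b.2.1)

end Reverse

theorem card_P_eq_card_P_reverse_general (n : ℕ) (w : ℕ → ℕ) :
    Cardinal.mk {y : ℕ → ℕ → ℕ // InP n w y} =
      Cardinal.mk {y : ℕ → ℕ → ℕ // InP n (fun i => w (n + 1 - i)) y} :=
  Cardinal.mk_congr <| (equivPB n w).trans <| (equivBReverse n w).trans (equivPB n _).symm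

/-- `P(w)` and `P(w*)` have the same cardinality. -/
theorem card_P_eq_card_P_reverse (n : ℕ) (hn : 1 ≤ n) (w : ℕ → ℕ) :
    Cardinal.mk {y : ℕ → ℕ → ℕ // InP n w y} =
      Cardinal.mk {y : ℕ → ℕ → ℕ // InP n (fun i => w (n + 1 - i)) y} :=
  card_P_eq_card_P_reverse_general n w
end

section
/- Suppose I(Y,k) < ∞ and let (Y', q) = B(Y,k). Then applying procedure a exactly q times gives a^q(Y', q, n-q+1) = (Y, 0, I(Y,k)); in particular A_q(Y') = Y. -/
open scoped BigOperators Classical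

/-!
Induction on `n`, following the recursion of `B`. With `I = I(Y,k)`, each branch of `B` ends
by lowering `y_{1,I}`, and a single step `a` at chute `1` undoes this: in `Lower(Y,1,I)` the entry
`(1,I)` is the rightmost violation of the ladder inequality in the top chute, up to the column
`J(Y,k) - 1` (resp. `n`) where `a` looks, by minimality of `J(Y,k)`. In the recursive branch the
first `q - 1` steps of `a` only touch chutes `≥ 2`, so they replay the steps for
`B(Del↘(Y), J(Y,k) - 1)` one chute lower, which by induction return `Del↘(Y)` at column
`I(Del↘(Y), J(Y,k) - 1) = J(Y,k) - 1`.
-/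

namespace IsTri

variable {n : ℕ} {y : ℕ → ℕ → ℕ}

theorem bounds_of_pos (hy : IsTri n y) {i j : ℕ} (h : 0 < y i j) :
    1 ≤ i ∧ i ≤ n ∧ 1 ≤ j ∧ j ≤ n - i + 1 := by
  by_contra hij
  exact h.ne' (hy.1 i j hij)

theorem ladder_le_s12 (hy : IsTri n y) (i : ℕ) {j : ℕ} (hj : 1 ≤ j) : y i (j + 1) ≤ y (i + 1) j := by
  by_cases h : 1 ≤ i ∧ i ≤ n ∧ 1 ≤ j + 1 ∧ j + 1 ≤ n - i + 1
  · simpa using hy.2 (i + 1) j (by omega) (by omega) hj (by omega)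
  · simp [hy.1 i (j + 1) h]

theorem delChute (hy : IsTri (n + 1) y) : IsTri n (_root_.delChute y) := by
  refine ⟨fun i j h => ?_, fun i j hi hin hj hjn => ?_⟩
  · unfold _root_.delChute
    split_ifs
    · exact hy.1 (i + 1) j (by omega)
    · rfl
  · simp only [_root_.delChute, if_pos (show 1 ≤ i - 1 ∧ 1 ≤ j + 1 by omega),
      if_pos (show 1 ≤ i ∧ 1 ≤ j by omega), Nat.sub_add_cancel (show 1 ≤ i by omega)]
    exact hy.ladder_le_s12 i hj

theorem adjChute_delChute (hy : IsTri n y) : adjChute (_root_.delChute y) (y 1) = y := by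
  funext p q
  simp only [adjChute, _root_.delChute]
  split_ifs <;> first
    | rfl
    | (congr 1; omega)
    | exact (hy.1 p q (by omega)).symm

end IsTri

theorem raise_lower {y : ℕ → ℕ → ℕ} {i j : ℕ} (h : 0 < y i j) : Raise (Lower y i j) i j = y := by
  funext p q
  simp only [Raise, Lower]
  split_ifs with hpq
  · obtain ⟨rfl, rfl⟩ := hpq
    omega
  · rfl

theorem kval_eq_of_greatest {z : ℕ → ℕ → ℕ} {i b K : ℕ} (hK : 1 ≤ K)
    (hK_mem : 2 ≤ K → K ≤ b ∧ z i K < z (i + 1) (K - 1))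
    (hK_max : ∀ j, 2 ≤ j → j ≤ b → z i j < z (i + 1) (j - 1) → j ≤ K) :
    Kval z i b = K := by
  set S := (Finset.Icc 2 b).filter (fun j => z i j < z (i + 1) (j - 1))
  have hsup : S.sup id ≤ K := Finset.sup_le fun j hj => by
    simp only [S, Finset.mem_filter, Finset.mem_Icc] at hj
    exact hK_max j hj.1.1 hj.1.2 hj.2
  rcases Nat.lt_or_ge K 2 with hK1 | hK2
  · obtain rfl : K = 1 := by omega
    exact sup_eq_right.mpr hsup
  · have hmem : K ∈ S := by
      simp only [S, Finset.mem_filter, Finset.mem_Icc]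
      exact ⟨⟨hK2, (hK_mem hK2).1⟩, (hK_mem hK2).2⟩
    exact le_antisymm (sup_le hsup hK) (le_sup_of_le_left (Finset.le_sup (f := id) hmem))

theorem aStep_lower_one {n : ℕ} {y : ℕ → ℕ → ℕ} (hy : IsTri n y) {I b : ℕ} (hIb : I ≤ b)
    (hpos : 0 < y 1 I) (hmax : ∀ j, I < j → j ≤ b → ¬ y 1 j < y 2 (j - 1)) :
    aStep (Lower y 1 I, 1, b) = (y, 0, I) := by
  have hI : 1 ≤ I := (hy.bounds_of_pos hpos).2.2.1
  have hK : Kval (Lower y 1 I) 1 b = I := by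
    refine kval_eq_of_greatest hI (fun hI2 => ⟨hIb, ?_⟩) fun j hj2 hjb hlt => ?_
    · have hle : y 1 I ≤ y 2 (I - 1) := by
        simpa only [Nat.sub_add_cancel hI] using hy.ladder_le_s12 1 (j := I - 1) (by omega)
      have h1 : Lower y 1 I 1 I = y 1 I - 1 := if_pos ⟨rfl, rfl⟩
      have h2 : Lower y 1 I (1 + 1) (I - 1) = y 2 (I - 1) := if_neg (by omega)
      omega
    · by_contra hjI
      have h1 : Lower y 1 I 1 j = y 1 j := if_neg (by omega)
      have h2 : Lower y 1 I (1 + 1) (j - 1) = y 2 (j - 1) := if_neg (by omega)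
      exact hmax j (by omega) hjb (by omega)
  simp only [aStep, hK, raise_lower hpos]

theorem lower_adjChute_one (W y : ℕ → ℕ → ℕ) (I : ℕ) :
    Lower (adjChute W (y 1)) 1 I = adjChute W (Lower y 1 I 1) := by
  funext p q
  simp only [Lower, adjChute]
  split_ifs <;> simp_all

def adjChuteState (t : ℕ → ℕ) (s : (ℕ → ℕ → ℕ) × ℕ × ℕ) : (ℕ → ℕ → ℕ) × ℕ × ℕ :=
  (adjChute s.1 t, s.2.1 + 1, s.2.2)

theorem kval_adjChute (W : ℕ → ℕ → ℕ) (t : ℕ → ℕ) {i : ℕ} (hi : 1 ≤ i) (b : ℕ) :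
    Kval (adjChute W t) (i + 1) b = Kval W i b := by
  have hrow : ∀ p, 1 ≤ p → adjChute W t (p + 1) = W p := fun p hp => by
    funext q
    simp [adjChute, show p ≠ 0 by omega]
  simp only [Kval, hrow i hi, hrow (i + 1) (by omega)]

theorem raise_adjChute (W : ℕ → ℕ → ℕ) (t : ℕ → ℕ) {i : ℕ} (hi : 1 ≤ i) (j : ℕ) :
    Raise (adjChute W t) (i + 1) j = adjChute (Raise W i j) t := by
  funext p q
  simp only [Raise, adjChute]
  split_ifs <;> first | rfl | omega

theorem aStep_adjChuteState (t : ℕ → ℕ) {s : (ℕ → ℕ → ℕ) × ℕ × ℕ} (hs : 1 ≤ s.2.1) :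
    aStep (adjChuteState t s) = adjChuteState t (aStep s) := by
  obtain ⟨W, i, b⟩ := s
  simp only [aStep, adjChuteState, kval_adjChute W t hs, raise_adjChute W t hs,
    Nat.add_sub_cancel, Nat.sub_add_cancel hs]

theorem iterate_aStep_adjChuteState (t : ℕ → ℕ) :
    ∀ (r : ℕ) (s : (ℕ → ℕ → ℕ) × ℕ × ℕ), r ≤ s.2.1 →
      aStep^[r] (adjChuteState t s) = adjChuteState t (aStep^[r] s)
  | 0, _, _ => rfl
  | r + 1, s, hr => by
    rw [Function.iterate_succ_apply, Function.iterate_succ_apply,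
      aStep_adjChuteState t (by omega)]
    exact iterate_aStep_adjChuteState t r (aStep s) (by simp only [aStep]; omega)

theorem Bproc_succ_of_nonempty {n : ℕ} {y : ℕ → ℕ → ℕ} {k : ℕ} (h : (Jset (n + 1) y k).Nonempty) :
    Bproc (n + 1) y k =
      (Lower (adjChute (Bproc n (delChute y) (Jdef (n + 1) y k - 1)).1 (y 1)) 1 (Idef (n + 1) y k),
        (Bproc n (delChute y) (Jdef (n + 1) y k - 1)).2 + 1) := by
  rw [Bproc, if_pos h]

theorem Bproc_succ_of_empty {n : ℕ} {y : ℕ → ℕ → ℕ} {k : ℕ} (h : ¬(Jset (n + 1) y k).Nonempty) :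
    Bproc (n + 1) y k = (Lower y 1 (Idef (n + 1) y k), 1) := by
  rw [Bproc, if_neg h]

theorem nonempty_iset_delChute_and_idef_eq {m : ℕ} {y : ℕ → ℕ → ℕ} {b : ℕ} (hb : 1 ≤ b)
    (hbm : b ≤ m) (hpos : 0 < y 2 b) :
    (Iset m (delChute y) b).Nonempty ∧ Idef m (delChute y) b = b := by
  have hmem : b ∈ Iset m (delChute y) b := by
    refine ⟨le_rfl, hbm, ?_⟩
    simpa only [delChute, if_pos (And.intro le_rfl hb)] using hpos
  exact ⟨⟨b, hmem⟩, le_antisymm (Nat.sInf_le hmem) (Nat.sInf_mem ⟨b, hmem⟩).1⟩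

theorem iterate_aStep_Bproc :
    ∀ (n : ℕ) (y : ℕ → ℕ → ℕ) (k : ℕ), IsTri n y → (Iset n y k).Nonempty →
      aStep^[(Bproc n y k).2] ((Bproc n y k).1, (Bproc n y k).2, n - (Bproc n y k).2 + 1) =
        (y, 0, Idef n y k)
  | 0, y, k, hy, ⟨j, _, hj0, hpos⟩ => absurd (hy.1 1 j (by omega)) hpos.ne'
  | m + 1, y, k, hy, hI => by
    set I := Idef (m + 1) y k
    obtain ⟨-, hIn, hpos⟩ : k ≤ I ∧ I ≤ m + 1 ∧ 0 < y 1 I := Nat.sInf_mem hI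
    have hI1 : 1 ≤ I := (hy.bounds_of_pos hpos).2.2.1
    by_cases hJ : (Jset (m + 1) y k).Nonempty
    · set J := Jdef (m + 1) y k
      obtain ⟨hIJ, hJn, hJlt⟩ : I < J ∧ J ≤ m + 1 ∧ y 1 J < y 2 (J - 1) := Nat.sInf_mem hJ
      have hJmin : ∀ j ∈ Jset (m + 1) y k, J ≤ j := fun j hj => Nat.sInf_le hj
      obtain ⟨hne, hIdel⟩ := nonempty_iset_delChute_and_idef_eq (show 1 ≤ J - 1 by omega)
        (show J - 1 ≤ m by omega) (show 0 < y 2 (J - 1) by omega)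
      have ih := iterate_aStep_Bproc m (delChute y) (J - 1) hy.delChute hne
      rw [hIdel] at ih
      set Z := (Bproc m (delChute y) (J - 1)).1
      set r := (Bproc m (delChute y) (J - 1)).2
      rw [Bproc_succ_of_nonempty hJ]
      calc aStep^[r + 1] (Lower (adjChute Z (y 1)) 1 I, r + 1, m + 1 - (r + 1) + 1)
          = aStep (aStep^[r] (adjChuteState (Lower y 1 I 1) (Z, r, m - r + 1))) := by
            rw [Function.iterate_succ_apply', lower_adjChute_one,
              show m + 1 - (r + 1) = m - r by omega]
            rfl
        _ = aStep (Lower y 1 I, 1, J - 1) := by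
            rw [iterate_aStep_adjChuteState _ r _ le_rfl, ih, adjChuteState,
              ← lower_adjChute_one, hy.adjChute_delChute]
        _ = (y, 0, I) := aStep_lower_one hy (by omega) hpos
            fun j hIj hjJ hlt => absurd (hJmin j ⟨hIj, by omega, hlt⟩) (by omega)
    · rw [Bproc_succ_of_empty hJ]
      exact aStep_lower_one hy (by omega) hpos fun j hIj hjn hlt => hJ ⟨j, hIj, hjn, hlt⟩

theorem aStep_iterate_Bproc_general (n : ℕ) (y : ℕ → ℕ → ℕ) (hy : IsTri n y)
    (k : ℕ) (hI : (Iset n y k).Nonempty) :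
    aStep^[(Bproc n y k).2] ((Bproc n y k).1, (Bproc n y k).2, n - (Bproc n y k).2 + 1) =
        (y, 0, Idef n y k) ∧
      Aproc n (Bproc n y k).2 (Bproc n y k).1 = y :=
  have h := iterate_aStep_Bproc n y k hy hI
  ⟨h, congrArg Prod.fst h⟩

/-- If `I(Y,k) < ∞` and `(Y', q) = B(Y,k)`, then
`a^q(Y', q, n - q + 1) = (Y, 0, I(Y,k))`; in particular `A_q(Y') = Y`. -/
theorem aStep_iterate_Bproc (n : ℕ) (hn : 1 ≤ n) (y : ℕ → ℕ → ℕ) (hy : IsTri n y)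
    (k : ℕ) (hk : 1 ≤ k) (hkn : k ≤ n) (hI : (Iset n y k).Nonempty) :
    aStep^[(Bproc n y k).2] ((Bproc n y k).1, (Bproc n y k).2, n - (Bproc n y k).2 + 1) =
        (y, 0, Idef n y k) ∧
      Aproc n (Bproc n y k).2 (Bproc n y k).1 = y :=
  aStep_iterate_Bproc_general n y hy k hI
end

section
/- For i > 1, procedure a commutes with deletion of the top chute in the following sense: if a(Y,i,k) = (X, i-1, k') and a(Del↘(Y), i-1, k) = (X', i-2, k''), then X = X' ∪↘ Top(Y) and k' = k''. -/
open scoped BigOperators Classical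

/-! Deleting the top chute shifts the chute index down by one, so `K_{i-1}(Del↘ Y, k) = K_i(Y, k)`
and raising an entry commutes with the deletion. For `i ≥ 2` the raised array still has top chute
`Top(Y)`, and readjoining it undoes the deletion since the array vanishes in row `0` and column `0`. -/

theorem delChute_apply (y : ℕ → ℕ → ℕ) {i j : ℕ} (hi : 1 ≤ i) (hj : 1 ≤ j) :
    delChute y i j = y (i + 1) j :=
  if_pos ⟨hi, hj⟩

theorem Kval_delChute (y : ℕ → ℕ → ℕ) {i : ℕ} (hi : 1 ≤ i) (k : ℕ) :
    Kval (delChute y) i k = Kval y (i + 1) k := by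
  unfold Kval
  rw [Finset.filter_congr fun j hj => by
    have hj : 2 ≤ j := (Finset.mem_Icc.mp hj).1
    rw [delChute_apply y hi (by omega), delChute_apply y (by omega) (by omega)]]

theorem one_le_Kval (y : ℕ → ℕ → ℕ) (i k : ℕ) : 1 ≤ Kval y i k :=
  le_sup_right

theorem Raise_delChute (y : ℕ → ℕ → ℕ) {i j : ℕ} (hi : 1 ≤ i) (hj : 1 ≤ j) :
    Raise (delChute y) i j = delChute (Raise y (i + 1) j) := by
  funext p q
  simp only [Raise, delChute]
  split_ifs <;> grind

theorem adjChute_delChute {z : ℕ → ℕ → ℕ} (hrow : ∀ j, z 0 j = 0) (hcol : ∀ i, z i 0 = 0) :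
    adjChute (delChute z) (z 1) = z := by
  funext p q
  rcases p with _ | _ | p
  · simp [adjChute, hrow]
  · simp [adjChute]
  · rcases q with _ | q
    · simp [adjChute, delChute, hcol]
    · simp [adjChute, delChute]

theorem IsTri.apply_zero_left {n : ℕ} {y : ℕ → ℕ → ℕ} (hy : IsTri n y) (j : ℕ) : y 0 j = 0 :=
  hy.1 0 j (by omega)

theorem IsTri.apply_zero_right {n : ℕ} {y : ℕ → ℕ → ℕ} (hy : IsTri n y) (i : ℕ) : y i 0 = 0 :=
  hy.1 i 0 (by omega)

theorem aStep_delChute_commute_general (n : ℕ) (y : ℕ → ℕ → ℕ) (hy : IsTri n y)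
    (i k : ℕ) (hi : 2 ≤ i) :
    (aStep (y, i, k)).1 = adjChute (aStep (delChute y, i - 1, k)).1 (y 1) ∧
      (aStep (y, i, k)).2.2 = (aStep (delChute y, i - 1, k)).2.2 := by
  obtain ⟨i, rfl⟩ : ∃ m, i = m + 1 := ⟨i - 1, by omega⟩
  have hK : Kval (delChute y) i k = Kval y (i + 1) k := Kval_delChute y (by omega) k
  have hK1 := one_le_Kval y (i + 1) k
  simp only [aStep, Nat.add_sub_cancel, hK, and_true]
  rw [Raise_delChute y (by omega) hK1]
  set z := Raise y (i + 1) (Kval y (i + 1) k)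
  have htop : z 1 = y 1 := funext fun q => if_neg (by omega)
  rw [← htop, adjChute_delChute]
  · exact fun j => (if_neg (by omega)).trans (hy.apply_zero_left j)
  · exact fun p => (if_neg (by omega)).trans (hy.apply_zero_right p)

/-- For `i > 1`, procedure `a` commutes with deletion of the top chute:
if `a(Y,i,k) = (X, i-1, k')` and `a(Del↘Y, i-1, k) = (X', i-2, k'')`, then
`X = X' ∪↘ Top(Y)` and `k' = k''`. -/
theorem aStep_delChute_commute (n : ℕ) (y : ℕ → ℕ → ℕ) (hy : IsTri n y)
    (i k : ℕ) (hi : 2 ≤ i) (hik : i ≤ n - k + 1) :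
    (aStep (y, i, k)).1 = adjChute (aStep (delChute y, i - 1, k)).1 (y 1) ∧
      (aStep (y, i, k)).2.2 = (aStep (delChute y, i - 1, k)).2.2 :=
  aStep_delChute_commute_general n y hy i k hi
end
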